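/- Let (𝒟,K) and (𝒞,J) be small sites and p : 𝒟 ⥤ 𝒞 a comorphism of sites which is continuous and a local fibration; let ρ_p : Sheaf J ⥤ Sheaf K be the restriction functor F ↦ F ∘ p.op and L : Sheaf K ⥤ Sheaf J a left adjoint of ρ_p. Then L is a fibration in the Street sense: for every object F of Sheaf K and every morphism φ : E ⟶ L(F) in Sheaf J, there exist a cartesian morphism (for L) f̂ : F' ⟶ F in Sheaf K and an isomorphism σ : L(F') ≅ E with L(f̂) = φ ∘ σ. -/

import Mathlib

open CategoryTheory Limits

universe u

/-- A morphism `f : d' ⟶ d` is cartesian for a functor `p : 𝒟 ⥤ 𝒞`. -/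
def IsCartesianFor {D : Type*} [Category D] {C : Type*} [Category C] (p : D ⥤ C)
    {d' d : D} (f : d' ⟶ d) : Prop :=
  ∀ {d'' : D} (g : d'' ⟶ d) (h : p.obj d'' ⟶ p.obj d'),
    h ≫ p.map f = p.map g → ∃! h' : d'' ⟶ d', p.map h' = h ∧ h' ≫ f = g

/-- A functor `p : 𝒟 ⥤ 𝒞` is a fibration in the Street sense. -/
def IsStreetFibration {D : Type*} [Category D] {C : Type*} [Category C] (p : D ⥤ C) : Prop :=
  ∀ (d : D) (c : C) (f : c ⟶ p.obj d),
    ∃ (d' : D) (fhat : d' ⟶ d) (σ : p.obj d' ≅ c),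
      IsCartesianFor p fhat ∧ p.map fhat = σ.hom ≫ f

/-- A morphism `f : d' ⟶ d` is `K`-locally cartesian for `p : 𝒟 ⥤ 𝒞`. -/
def LocallyCartesian {D : Type*} [Category D] {C : Type*} [Category C]
    (K : GrothendieckTopology D) (p : D ⥤ C) {d' d : D} (f : d' ⟶ d) : Prop :=
  (∀ (d'' : D) (g : d'' ⟶ d) (h : p.obj d'' ⟶ p.obj d'),
      h ≫ p.map f = p.map g →
      ∃ S : Sieve d'', S ∈ K d'' ∧
        ∀ {e : D} (v : e ⟶ d''), S.arrows v →
          ∃ hv : e ⟶ d', p.map v ≫ h = p.map hv ∧ hv ≫ f = v ≫ g) ∧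
  (∀ (d'' : D) (h h' : d'' ⟶ d'), h ≫ f = h' ≫ f → p.map h = p.map h' →
      ∃ S : Sieve d'', S ∈ K d'' ∧ ∀ {e : D} (v : e ⟶ d''), S.arrows v → v ≫ h = v ≫ h')

/-- A functor `p : (𝒟, K) ⥤ (𝒞, J)` is a comorphism of sites. -/
def IsComorphismOfSites {D : Type*} [Category D] {C : Type*} [Category C] (p : D ⥤ C)
    (K : GrothendieckTopology D) (J : GrothendieckTopology C) : Prop :=
  ∀ (d : D) (S : Sieve (p.obj d)), S ∈ J (p.obj d) → S.functorPullback p ∈ K d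

/-- A comorphism of sites `p : (𝒟,K) ⟶ (𝒞,J)` is a local fibration if every morphism
`f : c ⟶ p(d)` can be locally factored through `K`-locally cartesian morphisms along a
`J`-covering family. -/
def IsLocalFibration {D : Type*} [Category D] {C : Type*} [Category C] (p : D ⥤ C)
    (K : GrothendieckTopology D) (J : GrothendieckTopology C) : Prop :=
  IsComorphismOfSites p K J ∧
    ∀ (d : D) (c : C) (f : c ⟶ p.obj d),
      ∃ (ι : Type u) (di : ι → D) (fi : ∀ i, p.obj (di i) ⟶ c) (fhat : ∀ i, di i ⟶ d),
        Sieve.generate (Presieve.ofArrows (fun i => p.obj (di i)) fi) ∈ J c ∧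
          ∀ i, LocallyCartesian K p (fhat i) ∧ fi i ≫ f = p.map (fhat i)

variable {D C : Type u} [SmallCategory D] [SmallCategory C]

/-- The restriction functor `ρ_p : Sheaf J ⥤ Sheaf K`, `F ↦ F ∘ p.op`, defined when `p` is
continuous. -/
def restrictSheaf (p : D ⥤ C) (K : GrothendieckTopology D) (J : GrothendieckTopology C)
    (hcont : ∀ F : Sheaf J (Type u), Presheaf.IsSheaf K (p.op ⋙ F.val)) :
    Sheaf J (Type u) ⥤ Sheaf K (Type u) where
  obj F := ⟨p.op ⋙ F.val, hcont F⟩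
  map φ := ⟨Functor.whiskerLeft p.op φ.hom⟩
  map_id := by intros; apply ObjectProperty.hom_ext; rfl
  map_comp := by intros; apply ObjectProperty.hom_ext; rfl

/-!
Write `ρ` for the restriction functor and `η` for the unit of `L ⊣ ρ`. Given `φ : E ⟶ L F`, the
first projection of `F' = F ×_{ρ (L F)} ρ E` is cartesian for `L` as soon as the transpose
`L F' ⟶ E` of the second projection is invertible, which is formal. That map is locally surjective
because every section of `L F` is locally a restriction of some `η x`, and the local fibration
property lifts the restricting morphisms locally to `𝒟`. Local injectivity amounts to: for every
`β : F' ⟶ ρ G`, the restriction of `β (x, y)` along `v : c ⟶ p d` only depends on `y|v`. To see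
this, pair `x` with every section `y'` of `E` lying over a restriction of `η x` by gluing the values
of `β` along locally cartesian lifts; continuity of `p` makes the result independent of the lifts.
These pairings define a morphism from `F` to `ρ` of the dependent product of `G` along `φ`, and its
transpose shows that the pairing only depends on the image of `x` in `L F`.
-/

namespace CategoryTheory

open Opposite Limits

namespace Adjunction

variable {A B : Type*} [Category A] [Category B] {L : A ⥤ B} {R : B ⥤ A} (adj : L ⊣ R)
  {F P : A} {E : B} {φ : E ⟶ L.obj F} {fst : P ⟶ F} {snd : P ⟶ R.obj E}

lemma map_eq_homEquiv_symm_comp (w : fst ≫ adj.unit.app F = snd ≫ R.map φ) :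
    L.map fst = (adj.homEquiv P E).symm snd ≫ φ := by
  apply (adj.homEquiv P (L.obj F)).injective
  rw [adj.homEquiv_naturality_right, Equiv.apply_symm_apply, ← w, adj.homEquiv_unit,
    adj.unit_naturality]

theorem isCartesianFor_fst_of_isPullback (h : IsPullback fst snd (adj.unit.app F) (R.map φ))
    [IsIso ((adj.homEquiv P E).symm snd)] : IsCartesianFor L fst := by
  intro G g k hk
  set ψ := (adj.homEquiv P E).symm snd
  set κ := adj.homEquiv G E (k ≫ ψ)
  have map_eq_iff : ∀ h' : G ⟶ P, L.map h' = k ↔ h' ≫ snd = κ := fun h' => by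
    rw [← cancel_mono ψ, ← (adj.homEquiv G E).apply_eq_iff_eq, adj.homEquiv_naturality_left,
      Equiv.apply_symm_apply]
  have hκ : g ≫ adj.unit.app F = κ ≫ R.map φ := by
    rw [← adj.homEquiv_naturality_right, Category.assoc,
      ← adj.map_eq_homEquiv_symm_comp h.w, hk, adj.homEquiv_unit, adj.unit_naturality]
  refine ⟨h.lift g κ hκ, ⟨(map_eq_iff _).2 (h.lift_snd _ _ _), h.lift_fst _ _ _⟩, ?_⟩
  rintro h' ⟨hL, hfst⟩
  exact h.hom_ext (by rw [hfst, h.lift_fst]) (by rw [(map_eq_iff h').1 hL, h.lift_snd])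

end Adjunction

namespace Sheaf

variable {X : Type*} [Category X] {K : GrothendieckTopology X} {P Q R : Sheaf K (Type u)}
  (f : P ⟶ R) (g : Q ⟶ R)

def pointwisePullbackPresheaf : Xᵒᵖ ⥤ Type u where
  obj U := Types.PullbackObj (f.hom.app U) (g.hom.app U)
  map i := ↾fun s => ⟨(P.obj.map i s.1.1, Q.obj.map i s.1.2), by
    rw [NatTrans.naturality_apply, NatTrans.naturality_apply, s.2]⟩
  map_id U := by ext s <;> simp
  map_comp i j := by ext s <;> simp

lemma isSheaf_pointwisePullbackPresheaf : Presheaf.IsSheaf K (pointwisePullbackPresheaf f g) := by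
  rw [isSheaf_iff_isSheaf_of_type]
  intro U T hT x hx
  have hP := (isSheaf_iff_isSheaf_of_type K _).mp P.property T hT
  have hQ := (isSheaf_iff_isSheaf_of_type K _).mp Q.property T hT
  have hR := ((isSheaf_iff_isSheaf_of_type K _).mp R.property T hT).isSeparatedFor
  let x₁ : Presieve.FamilyOfElements P.obj T.arrows := fun _ i hi => (x i hi).1.1
  let x₂ : Presieve.FamilyOfElements Q.obj T.arrows := fun _ i hi => (x i hi).1.2
  have hx₁ : x₁.Compatible :=
    fun _ _ _ g₁ g₂ _ _ h₁ h₂ comm => congrArg (fun s => s.1.1) (hx g₁ g₂ h₁ h₂ comm)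
  have hx₂ : x₂.Compatible :=
    fun _ _ _ g₁ g₂ _ _ h₁ h₂ comm => congrArg (fun s => s.1.2) (hx g₁ g₂ h₁ h₂ comm)
  have w : f.hom.app _ (hP.amalgamate _ hx₁) = g.hom.app _ (hQ.amalgamate _ hx₂) := by
    refine hR.ext fun V i hi => ?_
    rw [← NatTrans.naturality_apply, ← NatTrans.naturality_apply, hP.valid_glue hx₁ i hi,
      hQ.valid_glue hx₂ i hi]
    exact (x i hi).2
  refine ⟨⟨(_, _), w⟩, fun V i hi => Subtype.ext (Prod.ext (hP.valid_glue hx₁ i hi)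
    (hQ.valid_glue hx₂ i hi)), fun y hy => Subtype.ext (Prod.ext ?_ ?_)⟩
  · exact hP.isSeparatedFor _ _ _ (fun V i hi => congrArg (fun s => s.1.1) (hy i hi))
      (hP.isAmalgamation hx₁)
  · exact hQ.isSeparatedFor _ _ _ (fun V i hi => congrArg (fun s => s.1.2) (hy i hi))
      (hQ.isAmalgamation hx₂)

def pointwisePullback : Sheaf K (Type u) :=
  ⟨pointwisePullbackPresheaf f g, isSheaf_pointwisePullbackPresheaf f g⟩

def pointwisePullbackFst : pointwisePullback f g ⟶ P :=
  ObjectProperty.homMk { app U := ↾fun s => s.1.1 }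

def pointwisePullbackSnd : pointwisePullback f g ⟶ Q :=
  ObjectProperty.homMk { app U := ↾fun s => s.1.2 }

theorem isPullback_pointwisePullback :
    IsPullback (pointwisePullbackFst f g) (pointwisePullbackSnd f g) f g := by
  refine IsPullback.of_isLimit (PullbackCone.IsLimit.mk ?_
    (fun s => ObjectProperty.homMk (Y := pointwisePullback f g)
      { app U := ↾fun ξ => ⟨(s.fst.hom.app U ξ, s.snd.hom.app U ξ),
          congrArg (fun k => k.hom.app U ξ) s.condition⟩
        naturality U V i := by
          apply ConcreteCategory.hom_ext; intro ξ
          apply Subtype.ext; apply Prod.ext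
          · exact NatTrans.naturality_apply s.fst.hom i ξ
          · exact NatTrans.naturality_apply s.snd.hom i ξ })
    (fun s => rfl) (fun s => rfl) fun s m hfst hsnd => ?_)
  · ext U s; exact s.2
  · apply ObjectProperty.hom_ext; ext U : 2
    apply ConcreteCategory.hom_ext; intro ξ
    exact Subtype.ext (Prod.ext (congrArg (fun k => k.hom.app U ξ) hfst)
      (congrArg (fun k => k.hom.app U ξ) hsnd))

end Sheaf

lemma GrothendieckTopology.eq_of_equalizerSieve_mem {X : Type*} [Category X]
    {J : GrothendieckTopology X} {G : Sheaf J (Type u)} {c : X} {t₁ t₂ : G.obj.obj (op c)}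
    (h : Presheaf.equalizerSieve (F := G.obj) t₁ t₂ ∈ J c) : t₁ = t₂ :=
  ((isSheaf_iff_isSheaf_of_type J _).mp G.property _ h).isSeparatedFor.ext fun _ _ hf => hf

theorem Sieve.functorPushforward_mem_of_isSheaf_comp {p : D ⥤ C} {K : GrothendieckTopology D}
    {J : GrothendieckTopology C}
    (hcont : ∀ F : Sheaf J (Type u), Presheaf.IsSheaf K (p.op ⋙ F.obj))
    {d : D} {T : Sieve d} (hT : T ∈ K d) : T.functorPushforward p ∈ J (p.obj d) := by
  let Ω : Sheaf J (Type u) :=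
    ⟨(Functor.closedSieves J).toFunctor,
      (isSheaf_iff_isSheaf_of_type J _).mpr (classifier_isSheaf J)⟩
  have hsep := ((isSheaf_iff_isSheaf_of_type K _).mp (hcont Ω) T hT).isSeparatedFor
  rw [← J.close_eq_top_iff_mem]
  -- in `Ω ∘ p.op`, the closure of the pushforward agrees with `⊤` along every `g ∈ T`
  let closure : (p.op ⋙ Ω.obj).obj (op d) :=
    ⟨J.close (T.functorPushforward p), J.close_isClosed _⟩
  let top : (p.op ⋙ Ω.obj).obj (op d) := ⟨(⊤ : Sieve (p.obj d)), fun _ _ _ => trivial⟩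
  refine congrArg Subtype.val (hsep.ext (t₁ := closure) (t₂ := top)
    fun d' g hg => Subtype.ext ?_)
  change (J.close _).pullback (p.map g) = (⊤ : Sieve (p.obj d)).pullback (p.map g)
  rw [Sieve.pullback_top, ← J.pullback_close, J.close_eq_top_iff_mem,
    Sieve.pullback_eq_top_of_mem _ (Sieve.image_mem_functorPushforward p T hg)]
  exact J.top_mem _

end CategoryTheory

open Opposite

namespace restrictSheaf

variable {p : D ⥤ C} {K : GrothendieckTopology D} {J : GrothendieckTopology C}
  {hcont : ∀ F : Sheaf J (Type u), Presheaf.IsSheaf K (p.op ⋙ F.obj)}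
  {L : Sheaf K (Type u) ⥤ Sheaf J (Type u)} (adj : L ⊣ restrictSheaf p K J hcont)

/-- `β.hom.app (op d)`, with values typed as sections of `G` rather than of `ρ G`. -/
def restrictApp {X : Sheaf K (Type u)} {G : Sheaf J (Type u)}
    (β : X ⟶ (restrictSheaf p K J hcont).obj G) {d : D} (ξ : X.obj.obj (op d)) :
    G.obj.obj (op (p.obj d)) :=
  β.hom.app (op d) ξ

lemma restrictApp_map {X : Sheaf K (Type u)} {G : Sheaf J (Type u)}
    (β : X ⟶ (restrictSheaf p K J hcont).obj G) {d d' : D} (w : d' ⟶ d) (ξ : X.obj.obj (op d)) :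
    restrictApp β (X.obj.map w.op ξ) = G.obj.map (p.map w).op (restrictApp β ξ) :=
  NatTrans.naturality_apply β.hom w.op ξ

abbrev unitElem {X : Sheaf K (Type u)} {d : D} (ξ : X.obj.obj (op d)) :
    (L.obj X).obj.obj (op (p.obj d)) :=
  restrictApp (adj.unit.app X) ξ

lemma unitElem_map {X : Sheaf K (Type u)} {d d' : D} (w : d' ⟶ d) (ξ : X.obj.obj (op d)) :
    unitElem adj (X.obj.map w.op ξ) = (L.obj X).obj.map (p.map w).op (unitElem adj ξ) :=
  restrictApp_map _ w ξ

lemma homEquiv_symm_app_unitElem {X : Sheaf K (Type u)} {G : Sheaf J (Type u)}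
    (β : X ⟶ (restrictSheaf p K J hcont).obj G) {d : D} (ξ : X.obj.obj (op d)) :
    ((adj.homEquiv X G).symm β).hom.app (op (p.obj d)) (unitElem adj ξ) = restrictApp β ξ := by
  have h := Equiv.apply_symm_apply (adj.homEquiv X G) β
  rw [Adjunction.homEquiv_unit] at h
  exact congrArg (fun k => k.hom.app (op d) ξ) h

lemma mem_of_unitElem_mem {X : Sheaf K (Type u)} (G : Subfunctor (L.obj X).obj)
    (hG : Presheaf.IsSheaf J G.toFunctor)
    (hunit : ∀ (d : D) (ξ : X.obj.obj (op d)), unitElem adj ξ ∈ G.obj (op (p.obj d)))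
    {c : C} (A : (L.obj X).obj.obj (op c)) : A ∈ G.obj (op c) := by
  let ι : (⟨G.toFunctor, hG⟩ : Sheaf J (Type u)) ⟶ L.obj X := ObjectProperty.homMk G.ι
  let w : X ⟶ (restrictSheaf p K J hcont).obj ⟨G.toFunctor, hG⟩ := ObjectProperty.homMk
    { app U := ↾fun ξ => ⟨unitElem adj ξ, hunit U.unop ξ⟩
      naturality U V i := by
        apply ConcreteCategory.hom_ext; intro ξ
        apply Subtype.ext
        exact NatTrans.naturality_apply (adj.unit.app X).hom i ξ }
  -- both sides are transposes of the unit of `X`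
  have hsection : (adj.homEquiv X _).symm w ≫ ι = 𝟙 (L.obj X) := by
    apply (adj.homEquiv X (L.obj X)).injective
    rw [Adjunction.homEquiv_naturality_right, Equiv.apply_symm_apply, Adjunction.homEquiv_id]
    rfl
  have hA : (((adj.homEquiv X _).symm w).hom.app (op c) A).1 = A :=
    congrArg (fun k => k.hom.app (op c) A) hsection
  exact hA ▸ (((adj.homEquiv X _).symm w).hom.app (op c) A).2

def unitRange (X : Sheaf K (Type u)) : Subfunctor (L.obj X).obj where
  obj U := { B | ∃ (d : D) (t : U.unop ⟶ p.obj d) (ξ : X.obj.obj (op d)),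
    B = (L.obj X).obj.map t.op (unitElem adj ξ) }
  map := by
    rintro U V i B ⟨d, t, ξ, rfl⟩
    exact ⟨d, i.unop ≫ t, ξ, by rw [op_comp, Functor.map_comp_apply]; rfl⟩

theorem sieveOfSection_unitRange_mem (X : Sheaf K (Type u)) {c : C}
    (A : (L.obj X).obj.obj (op c)) : (unitRange adj X).sieveOfSection A ∈ J c := by
  have hLX := (isSheaf_iff_isSheaf_of_type J _).mp (L.obj X).property
  refine mem_of_unitElem_mem adj _
    ((isSheaf_iff_isSheaf_of_type J _).mpr ((unitRange adj X).sheafify_isSheaf hLX))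
    (fun d ξ => (unitRange adj X).le_sheafify J _ ⟨d, 𝟙 _, ξ, ?_⟩) A
  rw [op_id, Functor.map_id_apply]

variable {F : Sheaf K (Type u)} {E : Sheaf J (Type u)} (φ : E ⟶ L.obj F)

def LiesOver {c c' : C} (z : (L.obj F).obj.obj (op c)) (u : c' ⟶ c) (y' : E.obj.obj (op c')) :
    Prop :=
  φ.hom.app (op c') y' = (L.obj F).obj.map u.op z

variable {φ}

lemma LiesOver.restrict {c c' c'' : C} {z : (L.obj F).obj.obj (op c)} {u : c' ⟶ c}
    {y' : E.obj.obj (op c')} (h : LiesOver φ z u y') (w : c'' ⟶ c') :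
    LiesOver φ z (w ≫ u) (E.obj.map w.op y') := by
  rw [LiesOver, NatTrans.naturality_apply, h, op_comp, Functor.map_comp_apply]

lemma liesOver_map_iff {c c₁ c' : C} {z : (L.obj F).obj.obj (op c)} {v : c₁ ⟶ c} {u : c' ⟶ c₁}
    {y' : E.obj.obj (op c')} :
    LiesOver φ ((L.obj F).obj.map v.op z) u y' ↔ LiesOver φ z (u ≫ v) y' := by
  rw [LiesOver, LiesOver, op_comp, Functor.map_comp_apply]

variable (φ)

abbrev fiberProduct : Sheaf K (Type u) :=
  Sheaf.pointwisePullback (adj.unit.app F) ((restrictSheaf p K J hcont).map φ)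

namespace fiberProduct

variable {adj φ} {d : D}

def fst (s : (fiberProduct adj φ).obj.obj (op d)) : F.obj.obj (op d) := s.1.1

def snd (s : (fiberProduct adj φ).obj.obj (op d)) : E.obj.obj (op (p.obj d)) := s.1.2

lemma unitElem_fst (s : (fiberProduct adj φ).obj.obj (op d)) :
    unitElem adj (fst s) = φ.hom.app _ (snd s) :=
  s.2

@[ext]
lemma ext {s t : (fiberProduct adj φ).obj.obj (op d)} (h₁ : fst s = fst t) (h₂ : snd s = snd t) :
    s = t :=
  Subtype.ext (Prod.ext h₁ h₂)

lemma snd_map {d' : D} (w : d' ⟶ d) (s : (fiberProduct adj φ).obj.obj (op d)) :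
    snd ((fiberProduct adj φ).obj.map w.op s) = E.obj.map (p.map w).op (snd s) :=
  rfl

end fiberProduct

noncomputable abbrev comparison : L.obj (fiberProduct adj φ) ⟶ E :=
  (adj.homEquiv _ E).symm (Sheaf.pointwisePullbackSnd _ _)

lemma comparison_app_unitElem {d : D} (s : (fiberProduct adj φ).obj.obj (op d)) :
    (comparison adj φ).hom.app (op (p.obj d)) (unitElem adj s) = fiberProduct.snd s :=
  homEquiv_symm_app_unitElem adj _ s

variable {adj φ}

def pairElem {d : D} {x : F.obj.obj (op d)} {c' : C} {u : c' ⟶ p.obj d} {y' : E.obj.obj (op c')}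
    (h : LiesOver φ (unitElem adj x) u y') {a : D} (r : a ⟶ d) (q : p.obj a ⟶ c')
    (hq : q ≫ u = p.map r) : (fiberProduct adj φ).obj.obj (op a) :=
  ⟨(F.obj.map r.op x, E.obj.map q.op y'), by
    change unitElem adj (F.obj.map r.op x) = φ.hom.app _ (E.obj.map q.op y')
    rw [unitElem_map, ← hq]
    exact (h.restrict q).symm⟩

lemma snd_pairElem {d : D} {x : F.obj.obj (op d)} {c' : C} {u : c' ⟶ p.obj d}
    {y' : E.obj.obj (op c')} (h : LiesOver φ (unitElem adj x) u y') {a : D} (r : a ⟶ d)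
    (q : p.obj a ⟶ c') (hq : q ≫ u = p.map r) :
    fiberProduct.snd (pairElem h r q hq) = E.obj.map q.op y' :=
  rfl

section pairElem

variable {d : D} {x : F.obj.obj (op d)} {c' : C} {u : c' ⟶ p.obj d} {y' : E.obj.obj (op c')}
  (h : LiesOver φ (unitElem adj x) u y')

lemma pairElem_congr {a : D} {r₁ r₂ : a ⟶ d} {q₁ q₂ : p.obj a ⟶ c'} (hr : r₁ = r₂) (hq : q₁ = q₂)
    (hq₁ : q₁ ≫ u = p.map r₁) (hq₂ : q₂ ≫ u = p.map r₂) :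
    pairElem h r₁ q₁ hq₁ = pairElem h r₂ q₂ hq₂ := by
  subst hr hq; rfl

lemma map_pairElem {a b : D} (r : a ⟶ d) (q : p.obj a ⟶ c') (hq : q ≫ u = p.map r) (w : b ⟶ a) :
    (fiberProduct adj φ).obj.map w.op (pairElem h r q hq)
      = pairElem h (w ≫ r) (p.map w ≫ q) (by rw [Category.assoc, hq, p.map_comp]) := by
  ext
  · exact (Functor.map_comp_apply F.obj r.op w.op x).symm
  · exact (Functor.map_comp_apply E.obj q.op (p.map w).op y').symm

variable {G : Sheaf J (Type u)} (β : fiberProduct adj φ ⟶ (restrictSheaf p K J hcont).obj G)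

/-- Locally `g₁` lifts to `𝒟`, and lifting `g₂` through the locally cartesian `r₂` then
identifies the two sections of the fibre product. -/
theorem map_app_pairElem_eq (hp : IsLocalFibration.{u} p K J) {a₁ a₂ : D} {r₁ : a₁ ⟶ d}
    {r₂ : a₂ ⟶ d} (hr₂ : LocallyCartesian K p r₂) {q₁ : p.obj a₁ ⟶ c'} {q₂ : p.obj a₂ ⟶ c'}
    (hq₁ : q₁ ≫ u = p.map r₁) (hq₂ : q₂ ≫ u = p.map r₂) {c₀ : C} (g₁ : c₀ ⟶ p.obj a₁)
    (g₂ : c₀ ⟶ p.obj a₂) (hg : g₁ ≫ q₁ = g₂ ≫ q₂) :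
    G.obj.map g₁.op (restrictApp β (pairElem h r₁ q₁ hq₁))
      = G.obj.map g₂.op (restrictApp β (pairElem h r₂ q₂ hq₂)) := by
  apply GrothendieckTopology.eq_of_equalizerSieve_mem
  obtain ⟨I, b, f, ĝ, hcov, hĝ⟩ := hp.2 a₁ c₀ g₁
  refine J.transitive hcov _ ?_
  rintro c₁ _ ⟨_, k, _, ⟨m⟩, rfl⟩
  have hcomm : (f m ≫ g₂) ≫ p.map r₂ = p.map (ĝ m ≫ r₁) := by
    rw [p.map_comp, ← (hĝ m).2, ← hq₁, ← hq₂]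
    simp only [Category.assoc, reassoc_of% hg]
  obtain ⟨S, hS, hlift⟩ := hr₂.1 (b m) (ĝ m ≫ r₁) (f m ≫ g₂) hcomm
  refine J.superset_covering ?_
    (J.pullback_stable k (Sieve.functorPushforward_mem_of_isSheaf_comp hcont hS))
  rintro c₂ n ⟨e, v, τ, hv, hn⟩
  obtain ⟨μ, hμp, hμ⟩ := hlift v hv
  have key : (fiberProduct adj φ).obj.map (v ≫ ĝ m).op (pairElem h r₁ q₁ hq₁)
      = (fiberProduct adj φ).obj.map μ.op (pairElem h r₂ q₂ hq₂) := by
    rw [map_pairElem, map_pairElem]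
    refine pairElem_congr h (by rw [Category.assoc, hμ]) ?_ _ _
    rw [← hμp, p.map_comp]
    simp only [Category.assoc, ← reassoc_of% (hĝ m).2, hg]
  have e₁ : (n ≫ k ≫ f m) ≫ g₁ = τ ≫ p.map (v ≫ ĝ m) := by
    rw [p.map_comp, ← (hĝ m).2, ← reassoc_of% hn]; simp only [Category.assoc]
  have e₂ : (n ≫ k ≫ f m) ≫ g₂ = τ ≫ p.map μ := by
    rw [← hμp, ← reassoc_of% hn]; simp only [Category.assoc]
  change G.obj.map (n ≫ k ≫ f m).op (G.obj.map g₁.op _)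
    = G.obj.map (n ≫ k ≫ f m).op (G.obj.map g₂.op _)
  simp only [← Functor.map_comp_apply, ← op_comp]
  rw [e₁, e₂, op_comp, op_comp, Functor.map_comp_apply, Functor.map_comp_apply,
    ← restrictApp_map, ← restrictApp_map, key]

end pairElem

section pairing

variable {G : Sheaf J (Type u)} (β : fiberProduct adj φ ⟶ (restrictSheaf p K J hcont).obj G)

def IsPairing {d : D} {x : F.obj.obj (op d)} {c' : C} {u : c' ⟶ p.obj d}
    {y' : E.obj.obj (op c')} (h : LiesOver φ (unitElem adj x) u y') (t : G.obj.obj (op c')) :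
    Prop :=
  ∀ ⦃a : D⦄ (r : a ⟶ d) (q : p.obj a ⟶ c') (hq : q ≫ u = p.map r),
    G.obj.map q.op t = restrictApp β (pairElem h r q hq)

variable {β}

lemma IsPairing.unique (hp : IsLocalFibration.{u} p K J) {d : D} {x : F.obj.obj (op d)} {c' : C}
    {u : c' ⟶ p.obj d} {y' : E.obj.obj (op c')} {h : LiesOver φ (unitElem adj x) u y'}
    {t₁ t₂ : G.obj.obj (op c')} (h₁ : IsPairing β h t₁) (h₂ : IsPairing β h t₂) : t₁ = t₂ := by
  obtain ⟨I, a, f, r, hcov, hr⟩ := hp.2 d c' u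
  refine GrothendieckTopology.eq_of_equalizerSieve_mem (J.superset_covering ?_ hcov)
  rintro c₀ _ ⟨_, k, _, ⟨i⟩, rfl⟩
  change G.obj.map (k ≫ f i).op t₁ = G.obj.map (k ≫ f i).op t₂
  rw [op_comp, Functor.map_comp_apply, Functor.map_comp_apply, h₁ (r i) (f i) (hr i).2,
    h₂ (r i) (f i) (hr i).2]

variable (β) in
theorem exists_isPairing (hp : IsLocalFibration.{u} p K J) {d : D} {x : F.obj.obj (op d)}
    {c' : C} {u : c' ⟶ p.obj d} {y' : E.obj.obj (op c')} (h : LiesOver φ (unitElem adj x) u y') :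
    ∃ t, IsPairing β h t := by
  obtain ⟨I, a, f, r, hcov, hr⟩ := hp.2 d c' u
  have hG : Presieve.IsSheafFor G.obj (Presieve.ofArrows _ f) :=
    (Presieve.isSheafFor_iff_generate _).mpr
      ((isSheaf_iff_isSheaf_of_type J _).mp G.property _ hcov)
  obtain ⟨t, ht, -⟩ := (Presieve.isSheafFor_arrows_iff _ _).mp hG
    (fun i => restrictApp β (pairElem h (r i) (f i) (hr i).2))
    (fun i j _ gi gj comm => map_app_pairElem_eq h β hp (hr j).1 _ _ gi gj comm)
  refine ⟨t, fun a₀ r₀ q₀ hq₀ => GrothendieckTopology.eq_of_equalizerSieve_mem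
    (J.superset_covering ?_ (J.pullback_stable q₀ hcov))⟩
  rintro c₁ g ⟨_, τ, _, ⟨i⟩, hτ⟩
  change G.obj.map g.op (G.obj.map q₀.op t) = G.obj.map g.op _
  rw [← Functor.map_comp_apply, ← op_comp, ← hτ, op_comp, Functor.map_comp_apply, ht i]
  exact (map_app_pairElem_eq h β hp (hr i).1 hq₀ _ g τ hτ.symm).symm

lemma IsPairing.restrict {d : D} {x : F.obj.obj (op d)} {c' c'' : C} {u : c' ⟶ p.obj d}
    {y' : E.obj.obj (op c')} {h : LiesOver φ (unitElem adj x) u y'} {t : G.obj.obj (op c')}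
    (ht : IsPairing β h t) (w : c'' ⟶ c') : IsPairing β (h.restrict w) (G.obj.map w.op t) := by
  intro a r q hq
  rw [← Functor.map_comp_apply, ← op_comp, ht r (q ≫ w) (by rw [Category.assoc, hq])]
  exact congrArg (restrictApp β) (fiberProduct.ext rfl (Functor.map_comp_apply _ _ _ _))

lemma liesOver_unitElem_map_iff {d d₁ : D} {x : F.obj.obj (op d)} (w : d₁ ⟶ d) {c' : C}
    {u : c' ⟶ p.obj d₁} {y' : E.obj.obj (op c')} :
    LiesOver φ (unitElem adj (F.obj.map w.op x)) u y'
      ↔ LiesOver φ (unitElem adj x) (u ≫ p.map w) y' := by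
  rw [unitElem_map, liesOver_map_iff]

lemma IsPairing.restrict_base {d d₁ : D} {x : F.obj.obj (op d)} (w : d₁ ⟶ d) {c' : C}
    {u : c' ⟶ p.obj d₁} {y' : E.obj.obj (op c')}
    {h : LiesOver φ (unitElem adj x) (u ≫ p.map w) y'} {t : G.obj.obj (op c')}
    (ht : IsPairing β h t) : IsPairing β ((liesOver_unitElem_map_iff w).2 h) t := by
  intro a r q hq
  rw [ht (r ≫ w) q (by rw [← Category.assoc, hq, p.map_comp])]
  exact congrArg (restrictApp β) (fiberProduct.ext (Functor.map_comp_apply _ _ _ _) rfl)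

lemma liesOver_unitElem_fst {d : D} (s : (fiberProduct adj φ).obj.obj (op d)) {c : C}
    (v : c ⟶ p.obj d) :
    LiesOver φ (unitElem adj (fiberProduct.fst s)) v (E.obj.map v.op (fiberProduct.snd s)) := by
  rw [LiesOver, NatTrans.naturality_apply, fiberProduct.unitElem_fst]

lemma isPairing_map_restrictApp {d : D} (s : (fiberProduct adj φ).obj.obj (op d)) {c : C}
    (v : c ⟶ p.obj d) :
    IsPairing β (liesOver_unitElem_fst s v) (G.obj.map v.op (restrictApp β s)) := by
  intro a r q hq
  rw [← Functor.map_comp_apply, ← op_comp, hq, ← restrictApp_map]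
  exact congrArg (restrictApp β) (fiberProduct.ext rfl
    (by rw [fiberProduct.snd_map, snd_pairElem, ← hq, op_comp, Functor.map_comp_apply]))

variable (β) in
noncomputable def pairing (hp : IsLocalFibration.{u} p K J) {d : D} {x : F.obj.obj (op d)}
    {c' : C} {u : c' ⟶ p.obj d} {y' : E.obj.obj (op c')} (h : LiesOver φ (unitElem adj x) u y') :
    G.obj.obj (op c') :=
  (exists_isPairing β hp h).choose

lemma isPairing_pairing (hp : IsLocalFibration.{u} p K J) {d : D} {x : F.obj.obj (op d)}
    {c' : C} {u : c' ⟶ p.obj d} {y' : E.obj.obj (op c')} (h : LiesOver φ (unitElem adj x) u y') :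
    IsPairing β h (pairing β hp h) :=
  (exists_isPairing β hp h).choose_spec

end pairing

variable (φ) in
/-- Sections over `c` of the dependent product of `G` along `φ : E ⟶ L F`. -/
structure FiberwiseMap (G : Sheaf J (Type u)) (c : C) where
  z : (L.obj F).obj.obj (op c)
  γ : ∀ {c' : C} (u : c' ⟶ c) (y' : E.obj.obj (op c')), LiesOver φ z u y' → G.obj.obj (op c')
  γ_restrict : ∀ {c' c'' : C} (w : c'' ⟶ c') (u : c' ⟶ c) (y' : E.obj.obj (op c'))
    (h : LiesOver φ z u y'),
    γ (w ≫ u) (E.obj.map w.op y') (h.restrict w) = G.obj.map w.op (γ u y' h)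

namespace FiberwiseMap

variable {G : Sheaf J (Type u)} {c : C}

lemma γ_congr {A B : FiberwiseMap φ G c} (e : A = B) {c' : C} {u₁ u₂ : c' ⟶ c} (hu : u₁ = u₂)
    {y₁ y₂ : E.obj.obj (op c')} (hy : y₁ = y₂) (h₁ : LiesOver φ A.z u₁ y₁)
    (h₂ : LiesOver φ B.z u₂ y₂) : A.γ u₁ y₁ h₁ = B.γ u₂ y₂ h₂ := by
  subst e hu hy; rfl

@[ext]
lemma ext {A B : FiberwiseMap φ G c} (hz : A.z = B.z)
    (hγ : ∀ {c' : C} (u : c' ⟶ c) (y' : E.obj.obj (op c')) (hA : LiesOver φ A.z u y')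
      (hB : LiesOver φ B.z u y'), A.γ u y' hA = B.γ u y' hB) : A = B := by
  obtain ⟨z, γA, _⟩ := A
  obtain ⟨_, γB, _⟩ := B
  obtain rfl := hz
  obtain rfl : @γA = @γB := by
    funext c' u y' h
    exact hγ u y' h h
  rfl

@[simps]
def restrict {c₁ : C} (A : FiberwiseMap φ G c) (v : c₁ ⟶ c) : FiberwiseMap φ G c₁ where
  z := (L.obj F).obj.map v.op A.z
  γ u y' h := A.γ (u ≫ v) y' (liesOver_map_iff.1 h)
  γ_restrict w u y' h :=
    (A.γ_congr rfl (Category.assoc w u v) rfl _ _).trans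
      (A.γ_restrict w (u ≫ v) y' (liesOver_map_iff.1 h))

lemma restrict_γ_id {c₁ : C} (A : FiberwiseMap φ G c) (v : c₁ ⟶ c) (y : E.obj.obj (op c₁))
    (h : LiesOver φ A.z v y) :
    (A.restrict v).γ (𝟙 c₁) y (liesOver_map_iff.2 ((Category.id_comp v).symm ▸ h)) = A.γ v y h :=
  A.γ_congr rfl (Category.id_comp v) rfl _ _

lemma restrict_comp_γ_id {c' c₀ : C} (A : FiberwiseMap φ G c) (u : c' ⟶ c)
    (y' : E.obj.obj (op c')) (h : LiesOver φ A.z u y') (g : c₀ ⟶ c') :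
    (A.restrict (g ≫ u)).γ (𝟙 c₀) (E.obj.map g.op y')
        (liesOver_map_iff.2 ((Category.id_comp (g ≫ u)).symm ▸ h.restrict g))
      = G.obj.map g.op (A.γ u y' h) :=
  (A.restrict_γ_id (g ≫ u) _ (h.restrict g)).trans (A.γ_restrict g u y' h)

variable (φ G) in
def presheaf : Cᵒᵖ ⥤ Type u where
  obj U := FiberwiseMap φ G U.unop
  map {U V} i := ↾fun (A : FiberwiseMap φ G U.unop) => A.restrict i.unop
  map_id U := by
    ext A
    · simp
    · exact A.γ_congr rfl (Category.comp_id _) rfl _ _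
  map_comp i j := by
    ext A
    · simp
    · exact A.γ_congr rfl (Category.assoc _ _ _).symm rfl _ _

section glue

variable {T : Sieve c} {fam : Presieve.FamilyOfElements (presheaf φ G) T.arrows}
  {z₀ : (L.obj F).obj.obj (op c)}

lemma restrict_fam_eq (hfam : fam.SieveCompatible) {c₀ c₁ : C} {f : c₀ ⟶ c} (hf : T f)
    (g : c₁ ⟶ c₀) {f' : c₁ ⟶ c} (hf' : T f') (e : g ≫ f = f') :
    (fam f hf).restrict g = fam f' hf' := by
  subst e
  exact (hfam f g hf).symm

lemma liesOver_fam_z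
    (hz₀ : ∀ ⦃c₀ : C⦄ (f : c₀ ⟶ c) (hf : T f), (fam f hf).z = (L.obj F).obj.map f.op z₀)
    {c' c₀ : C} {u : c' ⟶ c} {y' : E.obj.obj (op c')} (h : LiesOver φ z₀ u y')
    (g : c₀ ⟶ c') (hg : T (g ≫ u)) :
    LiesOver φ (fam (g ≫ u) hg).z (𝟙 c₀) (E.obj.map g.op y') := by
  rw [hz₀, liesOver_map_iff, Category.id_comp]
  exact h.restrict g

def localValues
    (hz₀ : ∀ ⦃c₀ : C⦄ (f : c₀ ⟶ c) (hf : T f), (fam f hf).z = (L.obj F).obj.map f.op z₀)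
    {c' : C} (u : c' ⟶ c) (y' : E.obj.obj (op c')) (h : LiesOver φ z₀ u y') :
    Presieve.FamilyOfElements G.obj (T.pullback u).arrows :=
  fun c₀ g hg => (fam (g ≫ u) hg).γ (𝟙 c₀) (E.obj.map g.op y') (liesOver_fam_z hz₀ h g hg)

lemma localValues_compatible
    (hz₀ : ∀ ⦃c₀ : C⦄ (f : c₀ ⟶ c) (hf : T f), (fam f hf).z = (L.obj F).obj.map f.op z₀)
    (hfam : fam.SieveCompatible) {c' : C} (u : c' ⟶ c)
    (y' : E.obj.obj (op c')) (h : LiesOver φ z₀ u y') : (localValues hz₀ u y' h).Compatible := by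
  rw [Presieve.compatible_iff_sieveCompatible]
  intro c₀ c₁ g g' hg
  refine (γ_congr (B := (fam (g ≫ u) hg).restrict (g' ≫ 𝟙 c₀)) ?_ rfl
    (by rw [op_comp, Functor.map_comp_apply]) _ _).trans (restrict_comp_γ_id _ _ _ _ _)
  rw [Category.comp_id]
  exact (restrict_fam_eq hfam hg g' _ (Category.assoc _ _ _).symm).symm

lemma isAmalgamation_localValues
    (hz₀ : ∀ ⦃c₀ : C⦄ (f : c₀ ⟶ c) (hf : T f), (fam f hf).z = (L.obj F).obj.map f.op z₀)
    {A : FiberwiseMap φ G c}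
    (hA : ∀ ⦃c₀ : C⦄ (f : c₀ ⟶ c) (hf : T f), A.restrict f = fam f hf) {c' : C} (u : c' ⟶ c)
    (y' : E.obj.obj (op c')) (h : LiesOver φ A.z u y') (h₀ : LiesOver φ z₀ u y') :
    (localValues hz₀ u y' h₀).IsAmalgamation (A.γ u y' h) :=
  fun _ g hg => (restrict_comp_γ_id _ u y' h g).symm.trans (γ_congr (hA _ hg) rfl rfl _ _)

end glue

theorem isSheaf_presheaf : Presheaf.IsSheaf J (presheaf φ G) := by
  rw [isSheaf_iff_isSheaf_of_type]
  intro c T hT fam hfam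
  rw [Presieve.compatible_iff_sieveCompatible] at hfam
  have hLF := (isSheaf_iff_isSheaf_of_type J _).mp (L.obj F).property T hT
  let zfam : Presieve.FamilyOfElements (L.obj F).obj T.arrows := fun _ f hf => (fam f hf).z
  have hzfam : zfam.Compatible := by
    rw [Presieve.compatible_iff_sieveCompatible]
    intro _ _ f g hf
    exact congrArg z (hfam f g hf)
  set z₀ := hLF.amalgamate zfam hzfam
  have hz₀ : ∀ ⦃c₀ : C⦄ (f : c₀ ⟶ c) (hf : T f), (fam f hf).z = (L.obj F).obj.map f.op z₀ :=
    fun _ f hf => (hLF.valid_glue hzfam f hf).symm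
  have hγ₀ : ∀ {c' : C} (u : c' ⟶ c) y' (h : LiesOver φ z₀ u y'),
      ∃! t, (localValues hz₀ u y' h).IsAmalgamation t := fun u y' h =>
    (isSheaf_iff_isSheaf_of_type J _).mp G.property _ (J.pullback_stable u hT) _
      (localValues_compatible hz₀ hfam u y' h)
  let γ₀ : ∀ {c' : C} (u : c' ⟶ c) (y' : E.obj.obj (op c')), LiesOver φ z₀ u y' →
      G.obj.obj (op c') :=
    fun u y' h => (hγ₀ u y' h).exists.choose
  have γ₀_spec : ∀ {c' : C} (u : c' ⟶ c) y' (h : LiesOver φ z₀ u y'),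
      (localValues hz₀ u y' h).IsAmalgamation (γ₀ u y' h) :=
    fun u y' h => (hγ₀ u y' h).exists.choose_spec
  let A₀ : FiberwiseMap φ G c :=
    { z := z₀
      γ := γ₀
      γ_restrict w u y' h := by
        refine (hγ₀ _ _ (h.restrict w)).unique (γ₀_spec _ _ (h.restrict w)) fun c₀ g hg => ?_
        rw [← Functor.map_comp_apply, ← op_comp, γ₀_spec u y' h (g ≫ w)
          (by simpa only [Sieve.pullback_apply, Category.assoc] using hg)]
        exact γ_congr (by congr 1; exact Category.assoc _ _ _) rfl
          (by rw [op_comp, Functor.map_comp_apply]) _ _ }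
  refine ⟨A₀, fun c₀ f hf => ?_, fun A hA => ?_⟩
  · refine FiberwiseMap.ext (hz₀ f hf).symm fun u y' hA hB => ?_
    have h₀ := liesOver_map_iff.1 hA
    refine (hγ₀ _ _ h₀).unique (γ₀_spec _ _ h₀) fun c₁ g hg => ?_
    exact (restrict_comp_γ_id _ u y' hB g).symm.trans
      (γ_congr (restrict_fam_eq hfam hf _ _ (Category.assoc _ _ _)) rfl rfl _ _)
  · refine FiberwiseMap.ext (hLF.isSeparatedFor zfam _ _ (fun _ f hf => congrArg z (hA f hf))
      (hLF.isAmalgamation hzfam)) fun u y' hA' hB => ?_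
    exact (hγ₀ _ _ hB).unique (isAmalgamation_localValues hz₀ hA u y' hA' hB) (γ₀_spec _ _ hB)

end FiberwiseMap

variable (φ) in
def FiberwiseMap.sheaf (G : Sheaf J (Type u)) : Sheaf J (Type u) :=
  ⟨FiberwiseMap.presheaf φ G, FiberwiseMap.isSheaf_presheaf⟩

section pairingMap

variable {G : Sheaf J (Type u)} (β : fiberProduct adj φ ⟶ (restrictSheaf p K J hcont).obj G)

noncomputable def pairingMap (hp : IsLocalFibration.{u} p K J) :
    F ⟶ (restrictSheaf p K J hcont).obj (FiberwiseMap.sheaf φ G) :=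
  ObjectProperty.homMk
    { app U := ↾fun (x : F.obj.obj (op U.unop)) =>
        (⟨unitElem adj x, fun _ _ h => pairing β hp h, fun w _ _ h =>
          IsPairing.unique hp (isPairing_pairing hp (h.restrict w))
            ((isPairing_pairing hp h).restrict w)⟩ : FiberwiseMap φ G (p.obj U.unop))
      naturality U V i := by
        apply ConcreteCategory.hom_ext; intro x
        refine FiberwiseMap.ext (unitElem_map adj i.unop x) fun u y' hA hB => ?_
        exact IsPairing.unique hp (isPairing_pairing hp hA)
          ((isPairing_pairing hp ((liesOver_unitElem_map_iff i.unop).1 hA)).restrict_base i.unop) }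

/-- Both sides are values of the transpose `L F ⟶ FiberwiseMap.sheaf φ G` of `pairingMap` at the
same section of `L F`. -/
theorem map_restrictApp_eq (hp : IsLocalFibration.{u} p K J) {c : C} {d₁ d₂ : D}
    (v₁ : c ⟶ p.obj d₁) (v₂ : c ⟶ p.obj d₂) (s₁ : (fiberProduct adj φ).obj.obj (op d₁))
    (s₂ : (fiberProduct adj φ).obj.obj (op d₂))
    (h : E.obj.map v₁.op (fiberProduct.snd s₁) = E.obj.map v₂.op (fiberProduct.snd s₂)) :
    G.obj.map v₁.op (restrictApp β s₁) = G.obj.map v₂.op (restrictApp β s₂) := by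
  set ψ := (adj.homEquiv F (FiberwiseMap.sheaf φ G)).symm (pairingMap β hp)
  have hz : (L.obj F).obj.map v₁.op (unitElem adj (fiberProduct.fst s₁))
      = (L.obj F).obj.map v₂.op (unitElem adj (fiberProduct.fst s₂)) := by
    rw [← liesOver_unitElem_fst s₁ v₁, ← liesOver_unitElem_fst s₂ v₂, h]
  have key :
      (FiberwiseMap.sheaf φ G).obj.map v₁.op (restrictApp (pairingMap β hp) (fiberProduct.fst s₁))
      = (FiberwiseMap.sheaf φ G).obj.map v₂.op
          (restrictApp (pairingMap β hp) (fiberProduct.fst s₂)) := by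
    rw [← homEquiv_symm_app_unitElem, ← homEquiv_symm_app_unitElem,
      ← NatTrans.naturality_apply ψ.hom, ← NatTrans.naturality_apply ψ.hom, hz]
  calc G.obj.map v₁.op (restrictApp β s₁)
      = pairing β hp (liesOver_unitElem_fst s₁ v₁) :=
        IsPairing.unique hp (isPairing_map_restrictApp s₁ v₁) (isPairing_pairing hp _)
    _ = pairing β hp (liesOver_unitElem_fst s₂ v₂) :=
        (FiberwiseMap.restrict_γ_id _ v₁ _ _).symm.trans
          ((FiberwiseMap.γ_congr key rfl h _ _).trans (FiberwiseMap.restrict_γ_id _ v₂ _ _))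
    _ = G.obj.map v₂.op (restrictApp β s₂) :=
        IsPairing.unique hp (isPairing_pairing hp _) (isPairing_map_restrictApp s₂ v₂)

end pairingMap

variable (adj φ)

lemma comparison_app_map_unitElem {c : C} {d : D} (t : c ⟶ p.obj d)
    (s : (fiberProduct adj φ).obj.obj (op d)) :
    (comparison adj φ).hom.app (op c) ((L.obj (fiberProduct adj φ)).obj.map t.op (unitElem adj s))
      = E.obj.map t.op (fiberProduct.snd s) := by
  rw [NatTrans.naturality_apply, comparison_app_unitElem]

theorem isLocallyInjective_comparison (hp : IsLocalFibration.{u} p K J) :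
    Sheaf.IsLocallyInjective (comparison adj φ) where
  equalizerSieve_mem {U} A B hAB := by
    refine J.superset_covering ?_ (J.intersection_covering
      (sieveOfSection_unitRange_mem adj _ A) (sieveOfSection_unitRange_mem adj _ B))
    rintro c₀ m ⟨⟨d₁, t₁, s₁, h₁⟩, ⟨d₂, t₂, s₂, h₂⟩⟩
    change (L.obj _).obj.map m.op A = (L.obj _).obj.map m.op B
    rw [h₁, h₂]
    refine map_restrictApp_eq (adj.unit.app _) hp t₁ t₂ s₁ s₂ ?_
    rw [← comparison_app_map_unitElem, ← comparison_app_map_unitElem, ← h₁, ← h₂,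
      NatTrans.naturality_apply, NatTrans.naturality_apply, hAB]

theorem isLocallySurjective_comparison (hp : IsLocalFibration.{u} p K J) :
    Sheaf.IsLocallySurjective (comparison adj φ) where
  imageSieve_mem {c} y := by
    refine J.transitive (sieveOfSection_unitRange_mem adj F (φ.hom.app _ y)) _ ?_
    rintro c₀ m ⟨d, t, ξ, hm⟩
    have h : LiesOver φ (unitElem adj ξ) t (E.obj.map m.op y) := by
      rw [LiesOver, NatTrans.naturality_apply]
      exact hm
    obtain ⟨I, a, f, r, hcov, hr⟩ := hp.2 d c₀ t
    refine J.superset_covering ?_ hcov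
    rintro c₁ _ ⟨_, k, _, ⟨i⟩, rfl⟩
    refine ⟨(L.obj _).obj.map k.op (unitElem adj (pairElem h (r i) (f i) (hr i).2)), ?_⟩
    rw [comparison_app_map_unitElem, snd_pairElem, ← Functor.map_comp_apply,
      ← Functor.map_comp_apply, ← op_comp, ← op_comp, Category.assoc]

theorem isIso_comparison (hp : IsLocalFibration.{u} p K J) : IsIso (comparison adj φ) :=
  (Sheaf.isLocallyBijective_iff_isIso _).1
    ⟨isLocallyInjective_comparison adj φ hp, isLocallySurjective_comparison adj φ hp⟩

end restrictSheaf

/-- For a continuous local fibration `p : (𝒟,K) ⟶ (𝒞,J)`, any left adjoint `L` of the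
restriction functor `ρ_p` is a fibration in the Street sense. -/
theorem isStreetFibration_of_continuous_localFibration
    (p : D ⥤ C) (K : GrothendieckTopology D) (J : GrothendieckTopology C)
    (hp : IsLocalFibration.{u} p K J)
    (hcont : ∀ F : Sheaf J (Type u), Presheaf.IsSheaf K (p.op ⋙ F.val))
    (L : Sheaf K (Type u) ⥤ Sheaf J (Type u))
    (adj : L ⊣ restrictSheaf p K J hcont) :
    IsStreetFibration L := by
  intro F E φ
  have hpb := Sheaf.isPullback_pointwisePullback (adj.unit.app F)
    ((restrictSheaf p K J hcont).map φ)
  have := restrictSheaf.isIso_comparison adj φ hp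
  exact ⟨_, _, asIso (restrictSheaf.comparison adj φ), adj.isCartesianFor_fst_of_isPullback hpb,
    adj.map_eq_homEquiv_symm_comp hpb.w⟩
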